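/- For every r ≥ 3 and 1 ≤ t ≤ r-2, in every spanning (r+t)-coloring of the edges of a complete r-uniform r-partite hypergraph, the vertex set can be covered by at most t+1 monochromatic components; i.e., cov(r, r+t) ≤ t+1. -/

import Mathlib

open Classical

variable {V : Type*}

/-- `e` is an edge of the complete `r`-uniform `r`-partite hypergraph with
partition `part`: it meets every class in exactly one vertex. -/
def IsPartiteEdge {r : ℕ} (part : V → Fin r) (e : Finset V) : Prop :=
  ∀ i : Fin r, (e.filter fun v => part v = i).card = 1

/-- `e` is an edge of the complete `r`-uniform `(r,ℓ)`-partite hypergraph: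
an `r`-set meeting every class in at most `ℓ` vertices. -/
def IsRLEdge {r : ℕ} (part : V → Fin r) (ℓ : ℕ) (e : Finset V) : Prop :=
  e.card = r ∧ ∀ i : Fin r, (e.filter fun v => part v = i).card ≤ ℓ

/-- An edge is friendly if it meets at most one class in exactly `ℓ` vertices. -/
def Friendly {r : ℕ} (part : V → Fin r) (ℓ : ℕ) (e : Finset V) : Prop :=
  (Finset.univ.filter fun i : Fin r => (e.filter fun v => part v = i).card = ℓ).card ≤ 1

/-- `u` and `v` lie in the same monochromatic component of color `c` of the
hypergraph with edge predicate `E` and edge coloring `χ`. -/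
def MonoConn {k : ℕ} (E : Finset V → Prop) (χ : Finset V → Fin k) (c : Fin k)
    (u v : V) : Prop :=
  Relation.ReflTransGen (fun a b => ∃ e : Finset V, E e ∧ χ e = c ∧ a ∈ e ∧ b ∈ e) u v

/-- The coloring `χ` is spanning: every vertex is incident with an edge of every color. -/
def Spanning {k : ℕ} (E : Finset V → Prop) (χ : Finset V → Fin k) : Prop :=
  ∀ v : V, ∀ c : Fin k, ∃ e : Finset V, E e ∧ χ e = c ∧ v ∈ e

/-- The vertex set can be covered by at most `m` monochromatic components. -/
def CoversBy {k : ℕ} (E : Finset V → Prop) (χ : Finset V → Fin k) (m : ℕ) : Prop :=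
  ∃ f : Fin m → Fin k × V, ∀ v : V, ∃ i : Fin m, MonoConn E χ (f i).1 (f i).2 v

/-- Hamming distance of the component vectors of two vertices: the number of
colors `c` for which they lie in different monochromatic components of color `c`. -/
noncomputable def HamDist {k : ℕ} (E : Finset V → Prop) (χ : Finset V → Fin k)
    (v w : V) : ℕ :=
  (Finset.univ.filter fun c : Fin k => ¬ MonoConn E χ c v w).card

/-!
Suppose no `t + 1` monochromatic components cover the vertices, and measure how far apart two
vertices are by the set of colors in which they lie in different components. Growing a
transversal greedily, one new class for each color separating it from a fixed vertex, shows
that vertices of different classes are separated in at most `t + 1` colors; with the triangle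
inequality and the spanning condition, vertices of one class are separated in at most `2t + 1`.
If all vertices of different classes are separated in at most `t` colors, the `t + 1`
components of one vertex `u` in colors joining it to some `v` of another class cover everything.
Otherwise pick such `u, v` separated exactly in a set `D` of `t + 1` colors, a set `T` of
`t + 1` colors joining them, and a vertex `z` separated from `u` in every color of `T`.
Depending on the class of `z`, either two vertices of one class are separated in all `2t + 2`
colors of `D ∪ T`, or the transversal `u, z, v` is separated from `u` in `2t + 2` colors;
both contradict the bounds above since `t ≥ 1`.
-/

open Finset

section MonoConn

variable {k m : ℕ} {E : Finset V → Prop} {χ : Finset V → Fin k} {c : Fin k} {a b x : V}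

theorem MonoConn.symm (h : MonoConn E χ c a b) : MonoConn E χ c b a := by
  induction h with
  | refl => exact Relation.ReflTransGen.refl
  | tail _ hstep ih =>
    obtain ⟨e, he, hc, hx, hy⟩ := hstep
    exact Relation.ReflTransGen.head ⟨e, he, hc, hy, hx⟩ ih

theorem MonoConn.trans (h₁ : MonoConn E χ c a x) (h₂ : MonoConn E χ c x b) :
    MonoConn E χ c a b :=
  Relation.ReflTransGen.trans h₁ h₂

theorem monoConn_of_mem {e : Finset V} (he : E e) (hc : χ e = c) (ha : a ∈ e) (hb : b ∈ e) :
    MonoConn E χ c a b :=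
  Relation.ReflTransGen.single ⟨e, he, hc, ha, hb⟩

noncomputable def sepColors (E : Finset V → Prop) (χ : Finset V → Fin k) (u v : V) :
    Finset (Fin k) :=
  {c | ¬ MonoConn E χ c u v}

theorem mem_sepColors : c ∈ sepColors E χ a b ↔ ¬ MonoConn E χ c a b := by
  simp [sepColors]

theorem notMem_sepColors : c ∉ sepColors E χ a b ↔ MonoConn E χ c a b := by
  simp [sepColors]

theorem sepColors_comm : sepColors E χ a b = sepColors E χ b a := by
  ext c
  simp only [mem_sepColors]
  exact ⟨mt MonoConn.symm, mt MonoConn.symm⟩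

theorem mem_sepColors_of_mem_of_notMem (h₁ : c ∈ sepColors E χ a x)
    (h₂ : c ∉ sepColors E χ x b) : c ∈ sepColors E χ a b :=
  mem_sepColors.2 fun hab => mem_sepColors.1 h₁ (hab.trans (notMem_sepColors.1 h₂).symm)

theorem mem_sepColors_of_notMem_of_mem (h₁ : c ∉ sepColors E χ a x)
    (h₂ : c ∈ sepColors E χ x b) : c ∈ sepColors E χ a b :=
  mem_sepColors.2 fun hab => mem_sepColors.1 h₂ ((notMem_sepColors.1 h₁).symm.trans hab)

theorem sepColors_subset_union :
    sepColors E χ a b ⊆ sepColors E χ a x ∪ sepColors E χ x b := by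
  intro c hc
  by_contra h
  rw [mem_union, not_or, notMem_sepColors, notMem_sepColors] at h
  exact mem_sepColors.1 hc (h.1.trans h.2)

theorem disjoint_sepColors_of_card_add_le
    (h : #(sepColors E χ a x) + #(sepColors E χ x b) ≤ #(sepColors E χ a b)) :
    Disjoint (sepColors E χ a x) (sepColors E χ x b) := by
  have hsub : #(sepColors E χ a b) ≤ #(sepColors E χ a x ∪ sepColors E χ x b) :=
    card_le_card sepColors_subset_union
  have hunion := card_union_add_card_inter (sepColors E χ a x) (sepColors E χ x b)
  rw [disjoint_iff_inter_eq_empty, ← card_eq_zero]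
  omega

theorem exists_mem_monoConn_of_card_lt {T : Finset (Fin k)}
    (h : #(sepColors E χ a b) < #T) : ∃ c ∈ T, MonoConn E χ c a b := by
  obtain ⟨c, hcT, hc⟩ := exists_mem_notMem_of_card_lt_card h
  exact ⟨c, hcT, notMem_sepColors.1 hc⟩

theorem coversBy_of_finset {A : Finset (Fin k × V)} (hA : #A ≤ m) (hne : A.Nonempty)
    (h : ∀ x, ∃ p ∈ A, MonoConn E χ p.1 p.2 x) : CoversBy E χ m := by
  obtain ⟨p₀, -⟩ := hne
  refine ⟨fun i => A.toList.getD i p₀, fun x => ?_⟩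
  obtain ⟨p, hp, hpx⟩ := h x
  obtain ⟨i, hi, rfl⟩ := List.getElem_of_mem (mem_toList.2 hp)
  refine ⟨⟨i, by rw [length_toList] at hi; omega⟩, ?_⟩
  show MonoConn E χ (A.toList.getD i p₀).1 (A.toList.getD i p₀).2 x
  rwa [List.getD_eq_getElem _ _ hi]

theorem exists_forall_not_monoConn (hcov : ¬ CoversBy E χ m) {T : Finset (Fin k)}
    (hT : T.Nonempty) (hTm : #T ≤ m) (u : V) : ∃ z, ∀ c ∈ T, ¬ MonoConn E χ c u z := by
  by_contra! h
  refine hcov (coversBy_of_finset (A := T.image (·, u)) (card_image_le.trans hTm)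
    (hT.image _) fun z => ?_)
  obtain ⟨c, hc, hcz⟩ := h z
  exact ⟨(c, u), mem_image_of_mem _ hc, hcz⟩

end MonoConn

section Partite

variable {r k : ℕ} {part : V → Fin r} {χ : Finset V → Fin k}

theorem IsPartiteEdge.exists_mem_part_eq {e : Finset V} (he : IsPartiteEdge part e)
    (i : Fin r) : ∃ y ∈ e, part y = i := by
  obtain ⟨y, hy⟩ := card_pos.1 ((he i).symm ▸ Nat.one_pos)
  exact ⟨y, (mem_filter.1 hy).1, (mem_filter.1 hy).2⟩

theorem isPartiteEdge_image {q : Fin r → V} (hq : Function.RightInverse q part) :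
    IsPartiteEdge part (univ.image q) := by
  intro i
  rw [card_eq_one]
  refine ⟨q i, ?_⟩
  ext v
  simp only [mem_filter, mem_image, mem_univ, true_and, mem_singleton]
  constructor
  · rintro ⟨⟨j, rfl⟩, rfl⟩
    rw [hq j]
  · rintro rfl
    exact ⟨⟨i, rfl⟩, hq i⟩

theorem exists_isPartiteEdge_superset (hne : ∀ i, ∃ v, part v = i) {X : Finset V}
    (hX : Set.InjOn part X) : ∃ e, IsPartiteEdge part e ∧ X ⊆ e := by
  let q : Fin r → V := fun i =>
    if h : ∃ x ∈ X, part x = i then h.choose else (hne i).choose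
  have hq : Function.RightInverse q part := by
    intro i
    simp only [q]
    split_ifs with h
    exacts [h.choose_spec.2, (hne i).choose_spec]
  refine ⟨univ.image q, isPartiteEdge_image hq,
    fun x hx => mem_image.2 ⟨part x, mem_univ _, ?_⟩⟩
  have h : ∃ y ∈ X, part y = part x := ⟨x, hx, rfl⟩
  simp only [q, dif_pos h]
  exact hX h.choose_spec.1 hx h.choose_spec.2

theorem exists_part_eq_not_monoConn (hs : Spanning (IsPartiteEdge part) χ) {c : Fin k}
    {u w : V} (hw : ¬ MonoConn (IsPartiteEdge part) χ c u w) (i : Fin r) :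
    ∃ y, part y = i ∧ ¬ MonoConn (IsPartiteEdge part) χ c u y := by
  obtain ⟨e, he, hc, hwe⟩ := hs w c
  obtain ⟨y, hye, rfl⟩ := he.exists_mem_part_eq i
  exact ⟨y, rfl, fun hy => hw (hy.trans (monoConn_of_mem he hc hye hwe))⟩

/-- Extend the partial transversal `X` class by class, each new vertex separated from `u` in
the color of an edge containing `X`; once `X` is itself an edge, its color separates `u` from
no vertex of `X`. -/
theorem card_add_lt_of_forall_exists_not_monoConn (hne : ∀ i, ∃ v, part v = i)
    (hs : Spanning (IsPartiteEdge part) χ)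
    (hconn : ∀ c u, ∃ w, ¬ MonoConn (IsPartiteEdge part) χ c u w)
    {u : V} {X : Finset V} (hX : Set.InjOn part X) (hu : u ∈ X) {C : Finset (Fin k)}
    (hC : ∀ c ∈ C, ∃ x ∈ X, ¬ MonoConn (IsPartiteEdge part) χ c u x) :
    #C + r < k + #X := by
  obtain ⟨e, he, hXe⟩ := exists_isPartiteEdge_superset hne hX
  have hcolor : χ e ∉ C := fun hc => by
    obtain ⟨x, hx, hux⟩ := hC _ hc
    exact hux (monoConn_of_mem he rfl (hXe hu) (hXe hx))
  have hCk : #C < k := by simpa using card_lt_univ_of_notMem hcolor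
  have hXcard : #(X.image part) = #X := card_image_of_injOn hX
  by_cases hfull : X.image part = univ
  · rw [hfull, card_univ, Fintype.card_fin] at hXcard
    omega
  have hXr : #X < r := by
    simpa [hXcard] using card_lt_card (ssubset_univ_iff.2 hfull)
  obtain ⟨i, hi⟩ : ∃ i, i ∉ X.image part := by simpa [eq_univ_iff_forall] using hfull
  obtain ⟨w, hw⟩ := hconn (χ e) u
  obtain ⟨y, rfl, hy⟩ := exists_part_eq_not_monoConn hs hw i
  have hyX : y ∉ X := fun h => hi (mem_image_of_mem part h)
  have hX' : Set.InjOn part (insert y X : Finset V) := by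
    rw [coe_insert, Set.injOn_insert (by simpa using hyX)]
    exact ⟨hX, by simpa using hi⟩
  have hC' : ∀ c ∈ insert (χ e) C, ∃ x ∈ insert y X,
      ¬ MonoConn (IsPartiteEdge part) χ c u x := by
    intro c hc
    rcases mem_insert.1 hc with rfl | hc
    · exact ⟨y, mem_insert_self y X, hy⟩
    · obtain ⟨x, hx, hux⟩ := hC c hc
      exact ⟨x, mem_insert_of_mem hx, hux⟩
  have := card_add_lt_of_forall_exists_not_monoConn hne hs hconn hX' (mem_insert_of_mem hu) hC'
  rw [card_insert_of_notMem hcolor, card_insert_of_notMem hyX] at this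
  omega
termination_by r - #X
decreasing_by rw [card_insert_of_notMem hyX]; omega

theorem card_sepColors_add_le (hne : ∀ i, ∃ v, part v = i)
    (hs : Spanning (IsPartiteEdge part) χ)
    (hconn : ∀ c u, ∃ w, ¬ MonoConn (IsPartiteEdge part) χ c u w)
    {a b : V} (hab : part a ≠ part b) :
    #(sepColors (IsPartiteEdge part) χ a b) + r ≤ k + 1 := by
  have := card_add_lt_of_forall_exists_not_monoConn hne hs hconn
    (coe_pair (a := a) (b := b) ▸ Set.injOn_pair.2 fun h => absurd h hab)
    (mem_insert_self a {b})
    fun c hc => ⟨b, by simp, mem_sepColors.1 hc⟩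
  have := card_le_two (a := a) (b := b)
  omega

theorem card_sepColors_union_add_le (hne : ∀ i, ∃ v, part v = i)
    (hs : Spanning (IsPartiteEdge part) χ)
    (hconn : ∀ c u, ∃ w, ¬ MonoConn (IsPartiteEdge part) χ c u w)
    {a b d : V} (hab : part a ≠ part b) (had : part a ≠ part d) (hbd : part b ≠ part d) :
    #(sepColors (IsPartiteEdge part) χ a b ∪ sepColors (IsPartiteEdge part) χ a d) + r ≤
      k + 2 := by
  have hX : Set.InjOn part ({a, b, d} : Finset V) := by
    intro x hx y hy hxy
    simp only [coe_insert, coe_singleton, Set.mem_insert_iff, Set.mem_singleton_iff] at hx hy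
    rcases hx with rfl | rfl | rfl <;> rcases hy with rfl | rfl | rfl <;> grind
  have := card_add_lt_of_forall_exists_not_monoConn hne hs hconn hX (mem_insert_self a _)
    fun c hc => (mem_union.1 hc).elim
      (fun hb => ⟨b, by simp, mem_sepColors.1 hb⟩) (fun hd => ⟨d, by simp, mem_sepColors.1 hd⟩)
  have := card_le_three (a := a) (b := b) (c := d)
  omega

theorem forall_monoConn_or_monoConn (hs : Spanning (IsPartiteEdge part) χ) (hr : 2 ≤ r)
    {a b : V} {c : Fin k}
    (h : ∀ x, part x ≠ part a →
      MonoConn (IsPartiteEdge part) χ c a x ∨ MonoConn (IsPartiteEdge part) χ c b x)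
    (x : V) :
    MonoConn (IsPartiteEdge part) χ c a x ∨ MonoConn (IsPartiteEdge part) χ c b x := by
  by_cases hx : part x = part a
  · have : Nontrivial (Fin r) := Fin.nontrivial_iff_two_le.2 hr
    obtain ⟨i, hi⟩ := exists_ne (part a)
    obtain ⟨e, he, hc, hxe⟩ := hs x c
    obtain ⟨w, hwe, rfl⟩ := he.exists_mem_part_eq i
    have hwx := monoConn_of_mem he hc hwe hxe
    exact (h w hi).imp (·.trans hwx) (·.trans hwx)
  · exact h x hx

/-- By the triangle inequality, two vertices of one class that are far apart are separated
from each vertex of another class in disjoint sets of colors; so in any fixed color their two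
components cover everything. -/
theorem card_sepColors_lt_of_part_eq (hs : Spanning (IsPartiteEdge part) χ) (hr : 2 ≤ r)
    (hk : 0 < k) {m s : ℕ} (hm : 2 ≤ m) (hcov : ¬ CoversBy (IsPartiteEdge part) χ m)
    (hcross : ∀ x y, part x ≠ part y → #(sepColors (IsPartiteEdge part) χ x y) ≤ s)
    {a b : V} (hab : part a = part b) : #(sepColors (IsPartiteEdge part) χ a b) < 2 * s := by
  by_contra! hfar
  let c : Fin k := ⟨0, hk⟩
  have hnear : ∀ x, part x ≠ part a →
      MonoConn (IsPartiteEdge part) χ c a x ∨ MonoConn (IsPartiteEdge part) χ c b x := by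
    intro x hx
    have hd : Disjoint (sepColors (IsPartiteEdge part) χ a x)
        (sepColors (IsPartiteEdge part) χ x b) := by
      have := hcross a x (Ne.symm hx)
      have := hcross x b fun h => hx (h.trans hab.symm)
      exact disjoint_sepColors_of_card_add_le (by omega)
    by_cases hca : c ∈ sepColors (IsPartiteEdge part) χ a x
    · exact Or.inr (notMem_sepColors.1 (disjoint_left.1 hd hca)).symm
    · exact Or.inl (notMem_sepColors.1 hca)
  refine hcov (coversBy_of_finset (A := {(c, a), (c, b)}) (card_le_two.trans hm)
    (insert_nonempty _ _) fun x => ?_)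
  rcases forall_monoConn_or_monoConn hs hr hnear x with h | h
  · exact ⟨(c, a), mem_insert_self _ _, h⟩
  · exact ⟨(c, b), by simp, h⟩

theorem exists_part_ne_card_sepColors_eq {t : ℕ} {χ : Finset V → Fin (r + t)}
    (hne : ∀ i, ∃ v, part v = i) (hr : t + 2 ≤ r)
    (hcov : ¬ CoversBy (IsPartiteEdge part) χ (t + 1))
    (hcross : ∀ x y, part x ≠ part y → #(sepColors (IsPartiteEdge part) χ x y) ≤ t + 1) :
    ∃ u v, part u ≠ part v ∧ #(sepColors (IsPartiteEdge part) χ u v) = t + 1 := by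
  by_contra! hfar
  have hnear : ∀ x y, part x ≠ part y → #(sepColors (IsPartiteEdge part) χ x y) ≤ t :=
    fun x y hxy => by have := hcross x y hxy; have := hfar x y hxy; omega
  obtain ⟨u, hu⟩ := hne ⟨0, by omega⟩
  obtain ⟨v, hv⟩ := hne ⟨1, by omega⟩
  have huv : part u ≠ part v := by simp [hu, hv]
  obtain ⟨T, hT, hTcard⟩ :=
    exists_subset_card_eq (s := univ \ sepColors (IsPartiteEdge part) χ u v) (n := t + 1)
      (by have := hnear u v huv; rw [card_sdiff_of_subset (subset_univ _), card_univ,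
        Fintype.card_fin]; omega)
  have hTu : ∀ x, ∃ c ∈ T, MonoConn (IsPartiteEdge part) χ c u x := by
    intro x
    by_cases hx : part x = part u
    · have hvx : ∃ c ∈ T, MonoConn (IsPartiteEdge part) χ c v x :=
        exists_mem_monoConn_of_card_lt (by have := hnear v x fun h => huv (h.trans hx).symm; omega)
      obtain ⟨c, hc, hvx⟩ := hvx
      exact ⟨c, hc, (notMem_sepColors.1 (mem_sdiff.1 (hT hc)).2).trans hvx⟩
    · exact exists_mem_monoConn_of_card_lt (by have := hnear u x (Ne.symm hx); omega)
  refine hcov (coversBy_of_finset (A := T.image (·, u)) (card_image_le.trans hTcard.le)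
    ((card_pos.1 (by omega)).image _) fun x => ?_)
  obtain ⟨c, hc, hcx⟩ := hTu x
  exact ⟨(c, u), mem_image_of_mem _ hc, hcx⟩

theorem card_sepColors_ne_of_part_ne {t : ℕ} {χ : Finset V → Fin (r + t)}
    (hne : ∀ i, ∃ v, part v = i) (hs : Spanning (IsPartiteEdge part) χ)
    (hconn : ∀ c u, ∃ w, ¬ MonoConn (IsPartiteEdge part) χ c u w)
    (ht : 1 ≤ t) (hr : t + 2 ≤ r) (hcov : ¬ CoversBy (IsPartiteEdge part) χ (t + 1))
    (hcross : ∀ x y, part x ≠ part y → #(sepColors (IsPartiteEdge part) χ x y) ≤ t + 1)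
    (hsame : ∀ x y, part x = part y → #(sepColors (IsPartiteEdge part) χ x y) < 2 * (t + 1))
    {u v : V} (huv : part u ≠ part v) : #(sepColors (IsPartiteEdge part) χ u v) ≠ t + 1 := by
  intro hDcard
  set D := sepColors (IsPartiteEdge part) χ u v
  obtain ⟨T, hTD, hT⟩ := exists_subset_card_eq (s := univ \ D) (n := t + 1)
    (by rw [card_sdiff_of_subset (subset_univ _), card_univ, Fintype.card_fin]; omega)
  have hDT : Disjoint D T := disjoint_sdiff.mono_right hTD
  have hDTcard : #(D ∪ T) = 2 * (t + 1) := by rw [card_union_of_disjoint hDT, hDcard, hT]; ring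
  obtain ⟨z, hz⟩ := exists_forall_not_monoConn hcov (card_pos.1 (by omega)) hT.le u
  have hTz : T ⊆ sepColors (IsPartiteEdge part) χ u z := fun c hc => mem_sepColors.2 (hz c hc)
  by_cases hzu : part z = part u
  · have hvz : T = sepColors (IsPartiteEdge part) χ v z := eq_of_subset_of_card_le
      (fun c hc => mem_sepColors_of_notMem_of_mem
        (by rw [sepColors_comm]; exact disjoint_right.1 hDT hc) (hTz hc))
      (hT ▸ hcross v z (hzu ▸ huv.symm))
    have hsub : D ∪ T ⊆ sepColors (IsPartiteEdge part) χ u z := union_subset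
      (fun c hc => mem_sepColors_of_mem_of_notMem hc (hvz ▸ disjoint_left.1 hDT hc)) hTz
    have := card_le_card hsub
    have := hsame u z hzu.symm
    omega
  by_cases hzv : part z = part v
  · have huz : T = sepColors (IsPartiteEdge part) χ u z :=
      eq_of_subset_of_card_le hTz (hT ▸ hcross u z (hzv ▸ huv))
    have hsub : D ∪ T ⊆ sepColors (IsPartiteEdge part) χ z v := union_subset
      (fun c hc => mem_sepColors_of_notMem_of_mem
        (by rw [sepColors_comm, ← huz]; exact disjoint_left.1 hDT hc) hc)
      (fun c hc => mem_sepColors_of_mem_of_notMem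
        (by rw [sepColors_comm]; exact hTz hc) (disjoint_right.1 hDT hc))
    have := card_le_card hsub
    have := hsame z v hzv
    omega
  have hsub : D ∪ T ⊆ sepColors (IsPartiteEdge part) χ u z ∪ D :=
    union_subset subset_union_right (hTz.trans subset_union_left)
  have := card_le_card hsub
  have : #(sepColors (IsPartiteEdge part) χ u z ∪ D) + r ≤ r + t + 2 :=
    card_sepColors_union_add_le hne hs hconn (Ne.symm hzu) huv hzv
  omega

end Partite

theorem stmt_7_general {r t : ℕ} (ht1 : 1 ≤ t) (ht2 : t ≤ r - 2)
    (part : V → Fin r) (hne : ∀ i : Fin r, ∃ v, part v = i)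
    (χ : Finset V → Fin (r + t)) (hs : Spanning (IsPartiteEdge part) χ) :
    CoversBy (IsPartiteEdge part) χ (t + 1) := by
  by_contra hcov
  have hr : t + 2 ≤ r := by omega
  have hconn : ∀ c u, ∃ w, ¬ MonoConn (IsPartiteEdge part) χ c u w := fun c u =>
    (exists_forall_not_monoConn hcov (singleton_nonempty c) (by simp) u).imp
      fun _ h => h c (mem_singleton_self c)
  have hcross : ∀ x y, part x ≠ part y → #(sepColors (IsPartiteEdge part) χ x y) ≤ t + 1 :=
    fun x y hxy => by have := card_sepColors_add_le hne hs hconn hxy; omega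
  have hsame :
      ∀ x y, part x = part y → #(sepColors (IsPartiteEdge part) χ x y) < 2 * (t + 1) :=
    fun _ _ => card_sepColors_lt_of_part_eq hs (by omega) (by omega) (by omega) hcov hcross
  obtain ⟨u, v, huv, hD⟩ := exists_part_ne_card_sepColors_eq hne hr hcov hcross
  exact card_sepColors_ne_of_part_ne hne hs hconn ht1 hr hcov hcross hsame huv hD

theorem stmt_7 [Fintype V] {r t : ℕ} (hr : 3 ≤ r) (ht1 : 1 ≤ t) (ht2 : t ≤ r - 2)
    (part : V → Fin r) (hne : ∀ i : Fin r, ∃ v, part v = i)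
    (χ : Finset V → Fin (r + t)) (hs : Spanning (IsPartiteEdge part) χ) :
    CoversBy (IsPartiteEdge part) χ (t + 1) :=
  stmt_7_general ht1 ht2 part hne χ hs
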